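/- For all α, β > 0 and every real number u ≤ 0, the Laplace transform of the Bessel distribution satisfies ∫_{[0,∞)} e^{ux} m_{α,β}(dx) = exp(αu/(β − u)); in particular (taking u = 0), m_{α,β} is a probability measure. -/

import Mathlib

open MeasureTheory Filter Set
open scoped ENNReal

/-- The modified Bessel function of the first kind of order one,
`I₁(r) = (r/2) Σ_{k=0}^∞ (r²/4)^k / (k!(k+1)!)`. -/
noncomputable def besselI1 (r : ℝ) : ℝ :=
  r / 2 * ∑' k : ℕ, (r ^ 2 / 4) ^ k / ((Nat.factorial k : ℝ) * (Nat.factorial (k + 1) : ℝ))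

/-- The Bessel distribution `m_{α,β}` on `[0,∞)`:
`m_{α,β}(dx) = e^{−α} δ₀(dx) + β e^{−α−βx} √(α/(βx)) I₁(2√(αβx)) dx`. -/
noncomputable def besselMeasure (α β : ℝ) : Measure ℝ :=
  ENNReal.ofReal (Real.exp (-α)) • Measure.dirac (0 : ℝ) +
    MeasureTheory.volume.withDensity fun x =>
      ENNReal.ofReal (Set.indicator (Set.Ioi (0 : ℝ))
        (fun x => β * Real.exp (-α - β * x) * Real.sqrt (α / (β * x)) *
          besselI1 (2 * Real.sqrt (α * β * x))) x)

/-! Expanding `I₁` as a power series, the density times `e^{ux}` on `x > 0` is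
`e^{-α} Σ_k (αβ)^{k+1} x^k e^{-(β-u)x} / (k! (k+1)!)`. Integrating term by term with
`∫₀^∞ x^k e^{-rx} dx = k!/r^{k+1}` gives `e^{-α} Σ_{k ≥ 0} t^{k+1}/(k+1)!` with `t = αβ/(β-u)`;
the atom `e^{-α}δ₀` supplies the missing `k = -1` term, so the transform is
`e^{-α} e^t = exp (αu/(β-u))`. -/

open Real
open scoped Nat

lemma summable_pow_div_factorial_mul_factorial_succ (y : ℝ) :
    Summable fun k : ℕ => y ^ k / ((k ! : ℝ) * ((k + 1)! : ℝ)) := by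
  refine (Real.summable_pow_div_factorial |y|).of_norm_bounded fun k => ?_
  have hk : (0 : ℝ) < k ! := mod_cast k.factorial_pos
  have hk1 : (1 : ℝ) ≤ (k + 1)! := mod_cast (k + 1).factorial_pos
  rw [norm_div, norm_pow, Real.norm_eq_abs, Real.norm_of_nonneg (by positivity)]
  exact div_le_div_of_nonneg_left (by positivity) hk (le_mul_of_one_le_right hk.le hk1)

@[fun_prop]
lemma measurable_besselI1 : Measurable besselI1 := by
  refine (measurable_id.div_const 2).mul <| measurable_of_tendsto_metrizable
    (f := fun n r => ∑ k ∈ Finset.range n, (r ^ 2 / 4) ^ k / ((k ! : ℝ) * ((k + 1)! : ℝ)))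
    (fun n => by fun_prop) (tendsto_pi_nhds.2 fun r => ?_)
  exact (summable_pow_div_factorial_mul_factorial_succ _).hasSum.tendsto_sum_nat

lemma besselI1_two_mul_sqrt {y : ℝ} (hy : 0 ≤ y) :
    besselI1 (2 * √y) = √y * ∑' k : ℕ, y ^ k / ((k ! : ℝ) * ((k + 1)! : ℝ)) := by
  rw [besselI1, mul_pow, sq_sqrt hy]
  ring_nf

noncomputable def besselDensity (α β x : ℝ) : ℝ :=
  β * exp (-α - β * x) * √(α / (β * x)) * besselI1 (2 * √(α * β * x))

lemma measurable_besselDensity (α β : ℝ) : Measurable (besselDensity α β) := by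
  unfold besselDensity
  fun_prop

lemma besselMeasure_eq (α β : ℝ) :
    besselMeasure α β = ENNReal.ofReal (exp (-α)) • Measure.dirac 0 +
      (volume.restrict (Ioi 0)).withDensity fun x => ENNReal.ofReal (besselDensity α β x) := by
  rw [besselMeasure, ← withDensity_indicator measurableSet_Ioi]
  congr 2
  exact (Set.indicator_comp_of_zero ENNReal.ofReal_zero).symm

lemma lintegral_besselMeasure (α β : ℝ) {f : ℝ → ℝ≥0∞} (hf : Measurable f) :
    ∫⁻ x, f x ∂besselMeasure α β = ENNReal.ofReal (exp (-α)) * f 0 +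
      ∫⁻ x in Ioi 0, ENNReal.ofReal (besselDensity α β x) * f x := by
  rw [besselMeasure_eq, lintegral_add_measure, lintegral_smul_measure, lintegral_dirac,
    lintegral_withDensity_eq_lintegral_mul _ (measurable_besselDensity α β).ennreal_ofReal hf,
    smul_eq_mul]
  rfl

lemma hasSum_besselDensity_mul_exp {α β x : ℝ} (hα : 0 ≤ α) (hβ : 0 < β) (hx : 0 < x) (u : ℝ) :
    HasSum (fun k : ℕ => exp (-α) * (α * β) ^ (k + 1) / ((k ! : ℝ) * ((k + 1)! : ℝ)) *
      (x ^ k * exp (-((β - u) * x)))) (besselDensity α β x * exp (u * x)) := by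
  have hsqrt : √(α / (β * x)) * √(α * β * x) = α := by
    rw [← sqrt_mul (by positivity), show α / (β * x) * (α * β * x) = α ^ 2 by field_simp,
      sqrt_sq hα]
  have hexp : exp (-α - β * x) * exp (u * x) = exp (-α) * exp (-((β - u) * x)) := by
    rw [← exp_add, ← exp_add]; ring_nf
  set S := ∑' k : ℕ, (α * β * x) ^ k / ((k ! : ℝ) * ((k + 1)! : ℝ))
  have h : HasSum _ (α * β * exp (-α) * exp (-((β - u) * x)) * S) :=
    (summable_pow_div_factorial_mul_factorial_succ (α * β * x)).hasSum.mul_left _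
  have hvalue : besselDensity α β x * exp (u * x) = α * β * exp (-α) * exp (-((β - u) * x)) * S :=
    calc besselDensity α β x * exp (u * x)
        = β * S * (√(α / (β * x)) * √(α * β * x)) * (exp (-α - β * x) * exp (u * x)) := by
          rw [besselDensity, besselI1_two_mul_sqrt (by positivity)]; ring
      _ = α * β * exp (-α) * exp (-((β - u) * x)) * S := by rw [hsqrt, hexp]; ring
  rw [hvalue]
  convert h using 2 with k
  ring

lemma integral_pow_mul_exp_neg_mul_Ioi (k : ℕ) {r : ℝ} (hr : 0 < r) :
    ∫ x in Ioi 0, x ^ k * exp (-(r * x)) = k ! / r ^ (k + 1) := by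
  have h := integral_rpow_mul_exp_neg_mul_Ioi (a := k + 1) (by positivity) hr
  simp only [add_sub_cancel_right, rpow_natCast, Gamma_nat_eq_factorial] at h
  rw [h, ← Nat.cast_succ, rpow_natCast, one_div, inv_pow, div_eq_mul_inv, mul_comm]

lemma lintegral_pow_mul_exp_neg_mul_Ioi (k : ℕ) {r : ℝ} (hr : 0 < r) :
    ∫⁻ x in Ioi 0, ENNReal.ofReal (x ^ k * exp (-(r * x))) =
      ENNReal.ofReal (k ! / r ^ (k + 1)) := by
  have hpos : 0 < ∫ x in Ioi 0, x ^ k * exp (-(r * x)) := by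
    rw [integral_pow_mul_exp_neg_mul_Ioi k hr]; positivity
  rw [← integral_pow_mul_exp_neg_mul_Ioi k hr, ofReal_integral_eq_lintegral_ofReal
    (Integrable.of_integral_ne_zero hpos.ne')]
  filter_upwards [ae_restrict_mem measurableSet_Ioi] with x hx
  exact mul_nonneg (pow_nonneg (le_of_lt hx) k) (exp_nonneg _)

lemma lintegral_besselDensity_mul_exp {α β u : ℝ} (hα : 0 ≤ α) (hβ : 0 < β) (hu : u < β) :
    ∫⁻ x in Ioi 0, ENNReal.ofReal (besselDensity α β x) * ENNReal.ofReal (exp (u * x)) =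
      ∑' k : ℕ, ENNReal.ofReal (exp (-α) * (α * β / (β - u)) ^ (k + 1) / (k + 1)!) := by
  have hr : 0 < β - u := sub_pos.2 hu
  set c : ℕ → ℝ := fun k => exp (-α) * (α * β) ^ (k + 1) / ((k ! : ℝ) * ((k + 1)! : ℝ))
  have hc : ∀ k, 0 ≤ c k := fun k => by positivity
  have hseries : ∀ x ∈ Ioi (0 : ℝ),
      ENNReal.ofReal (besselDensity α β x) * ENNReal.ofReal (exp (u * x)) =
        ∑' k, ENNReal.ofReal (c k) * ENNReal.ofReal (x ^ k * exp (-((β - u) * x))) := by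
    intro x (hx : 0 < x)
    have h := hasSum_besselDensity_mul_exp hα hβ hx u
    rw [← ENNReal.ofReal_mul' (exp_nonneg _), ← h.tsum_eq,
      ENNReal.ofReal_tsum_of_nonneg (fun k => by positivity) h.summable]
    exact tsum_congr fun k => ENNReal.ofReal_mul (hc k)
  rw [setLIntegral_congr_fun measurableSet_Ioi hseries, lintegral_tsum fun k => by fun_prop]
  refine tsum_congr fun k => ?_
  rw [lintegral_const_mul _ (by fun_prop), lintegral_pow_mul_exp_neg_mul_Ioi k hr,
    ← ENNReal.ofReal_mul (hc k)]
  congr 1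
  simp only [c, Nat.factorial_succ, Nat.cast_mul, div_pow]
  field_simp

lemma lintegral_exp_mul_besselMeasure {α β u : ℝ} (hα : 0 ≤ α) (hβ : 0 < β) (hu : u < β) :
    ∫⁻ x, ENNReal.ofReal (exp (u * x)) ∂besselMeasure α β =
      ENNReal.ofReal (exp (α * u / (β - u))) := by
  rw [lintegral_besselMeasure _ _ (by fun_prop), lintegral_besselDensity_mul_exp hα hβ hu]
  set t := α * β / (β - u)
  have ht : 0 ≤ t := div_nonneg (by positivity) (sub_pos.2 hu).le
  have hexponent : -α + t = α * u / (β - u) := by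
    simp only [t]
    field_simp [(sub_pos.2 hu).ne']
    ring
  have hexp : HasSum (fun n : ℕ => exp (-α) * (t ^ n / n !)) (exp (-α) * exp t) := by
    rw [exp_eq_exp_ℝ]
    exact (NormedSpace.expSeries_div_hasSum_exp t).mul_left _
  rw [← hexponent, exp_add, ← hexp.tsum_eq,
    ENNReal.ofReal_tsum_of_nonneg (fun n => by positivity) hexp.summable,
    tsum_eq_zero_add' (f := fun n : ℕ => ENNReal.ofReal (exp (-α) * (t ^ n / n !)))
      ENNReal.summable]
  simp [mul_div_assoc]

lemma isProbabilityMeasure_besselMeasure {α β : ℝ} (hα : 0 ≤ α) (hβ : 0 < β) :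
    IsProbabilityMeasure (besselMeasure α β) :=
  ⟨by simpa using lintegral_exp_mul_besselMeasure (u := 0) hα hβ hβ⟩

lemma integral_exp_mul_besselMeasure {α β u : ℝ} (hα : 0 ≤ α) (hβ : 0 < β) (hu : u < β) :
    ∫ x, exp (u * x) ∂besselMeasure α β = exp (α * u / (β - u)) := by
  rw [integral_eq_lintegral_of_nonneg_ae (ae_of_all _ fun x => (exp_pos _).le) (by fun_prop),
    lintegral_exp_mul_besselMeasure hα hβ hu, ENNReal.toReal_ofReal (exp_nonneg _)]

theorem bessel_laplace_transform (α β : ℝ) (hα : 0 < α) (hβ : 0 < β) :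
    IsProbabilityMeasure (besselMeasure α β) ∧
      ∀ u : ℝ, u ≤ 0 →
        ∫ x, Real.exp (u * x) ∂ besselMeasure α β = Real.exp (α * u / (β - u)) :=
  ⟨isProbabilityMeasure_besselMeasure hα.le hβ,
    fun _ hu => integral_exp_mul_besselMeasure hα.le hβ (hu.trans_lt hβ)⟩
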